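/- Tail bound for a truncated Hankel operator: under ‖A^t‖₂ ≤ ψρ^t for all t ≥ 0 with 0 ≤ ρ < 1, the infinite Hankel matrix H_{d,∞} with blocks (CA^{d+i+j}B)_{i,j≥0} satisfies ‖H_{d,∞}‖₂ ≤ ψ³ ρ^d ‖C‖₂ ‖B‖₂ / (1 − ρ²). -/

import Mathlib

/-!
The Hankel matrix factors as `O * A ^ d * R`, where `O` stacks the blocks `C * A ^ i` in a column
and `R` lines up the blocks `A ^ j * B` in a row. The operator norm of a stack of blocks is at most
the ℓ² norm of the blocks' operator norms, and `‖C * A ^ i‖ ≤ ψ ρ ^ i ‖C‖`, so a geometric sum gives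
`‖O‖ ≤ ψ ‖C‖ / √(1 - ρ²)` and likewise `‖R‖ ≤ ψ ‖B‖ / √(1 - ρ²)`; together with
`‖A ^ d‖ ≤ ψ ρ ^ d` this is the bound.
-/

/-- Euclidean norm of a finite-dimensional real vector. -/
noncomputable def eNorm {ι : Type*} [Fintype ι] (v : ι → ℝ) : ℝ :=
  Real.sqrt (∑ i, v i ^ 2)

/-- Spectral (ℓ₂ operator) norm of a real matrix. -/
noncomputable def specNorm {ι κ : Type*} [Fintype ι] [Fintype κ] (M : Matrix ι κ ℝ) : ℝ :=
  ⨆ v : {v : κ → ℝ // eNorm v ≤ 1}, eNorm (M.mulVec v.1)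

lemma sqrt_sum_sq_le_of_le_geometric {N : ℕ} {f : Fin N → ℝ} {c ρ : ℝ} (hc : 0 ≤ c)
    (hρ0 : 0 ≤ ρ) (hρ1 : ρ < 1) (hf0 : ∀ i, 0 ≤ f i) (hf : ∀ i, f i ≤ c * ρ ^ (i : ℕ)) :
    √(∑ i, f i ^ 2) ≤ c / √(1 - ρ ^ 2) := by
  have hρ2 : ρ ^ 2 < 1 := by nlinarith
  have hgeom : ∑ i : Fin N, (ρ ^ 2) ^ (i : ℕ) ≤ 1 / (1 - ρ ^ 2) := by
    have := geom_sum_Ico_le_of_lt_one (m := 0) (n := N) (sq_nonneg ρ) hρ2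
    rwa [← Finset.range_eq_Ico, pow_zero, ← Fin.sum_univ_eq_sum_range] at this
  have hsq : ∑ i, f i ^ 2 ≤ c ^ 2 * (1 / (1 - ρ ^ 2)) :=
    calc ∑ i, f i ^ 2 ≤ ∑ i : Fin N, (c * ρ ^ (i : ℕ)) ^ 2 := by
          gcongr with i
          exacts [hf0 i, hf i]
      _ = c ^ 2 * ∑ i : Fin N, (ρ ^ 2) ^ (i : ℕ) := by
          simp only [Finset.mul_sum, mul_pow, ← pow_mul, mul_comm]
      _ ≤ _ := by gcongr
  calc √(∑ i, f i ^ 2) ≤ √(c ^ 2 * (1 / (1 - ρ ^ 2))) := Real.sqrt_le_sqrt hsq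
    _ = c / √(1 - ρ ^ 2) := by
        rw [Real.sqrt_mul (sq_nonneg c), Real.sqrt_sq hc, Real.sqrt_div' _ (by linarith),
          Real.sqrt_one, mul_one_div]

open scoped Matrix.Norms.L2Operator

namespace Matrix

section SpecNorm

variable {ι κ : Type*} [Fintype ι] [Fintype κ]

lemma eNorm_eq_norm (v : ι → ℝ) : eNorm v = ‖WithLp.toLp 2 v‖ := by
  simp [eNorm, EuclideanSpace.norm_eq]

variable [DecidableEq κ]

lemma eNorm_mulVec_le (M : Matrix ι κ ℝ) (v : κ → ℝ) : eNorm (M *ᵥ v) ≤ ‖M‖ * eNorm v := by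
  rw [eNorm_eq_norm, eNorm_eq_norm]
  exact M.l2_opNorm_mulVec (WithLp.toLp 2 v)

theorem specNorm_eq_l2_opNorm (M : Matrix ι κ ℝ) : specNorm M = ‖M‖ := by
  have hle (v : {v : κ → ℝ // eNorm v ≤ 1}) : eNorm (M *ᵥ v.1) ≤ ‖M‖ :=
    (eNorm_mulVec_le M v.1).trans (mul_le_of_le_one_right (norm_nonneg M) v.2)
  refine le_antisymm (Real.iSup_le hle (norm_nonneg M)) ?_
  refine ContinuousLinearMap.opNorm_le_of_unit_norm
    (Real.iSup_nonneg fun _ => Real.sqrt_nonneg _) fun x hx => ?_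
  have hx' : eNorm x.ofLp ≤ 1 := by rw [eNorm_eq_norm]; exact hx.le
  have := le_ciSup (f := fun v : {v : κ → ℝ // eNorm v ≤ 1} => eNorm (M *ᵥ v.1))
    ⟨‖M‖, Set.forall_mem_range.2 hle⟩ ⟨x.ofLp, hx'⟩
  rw [eNorm_eq_norm] at this
  exact this

end SpecNorm

section Blocks

variable {ι ι' κ μ ν α : Type*}

def blockCol (M : ι → Matrix κ μ α) : Matrix (ι × κ) μ α := of fun ik l => M ik.1 ik.2 l

def blockRow (M : ι → Matrix κ μ α) : Matrix κ (ι × μ) α := of fun k il => M il.1 k il.2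

lemma blockRow_eq_transpose_blockCol (M : ι → Matrix κ μ α) :
    blockRow M = (blockCol fun i => (M i)ᵀ)ᵀ := rfl

variable [Fintype μ] [NonUnitalNonAssocSemiring α]

lemma blockCol_mul (M : ι → Matrix κ μ α) (P : Matrix μ ν α) :
    blockCol M * P = blockCol fun i => M i * P := rfl

lemma blockCol_mul_blockRow (M : ι → Matrix κ μ α) (P : ι' → Matrix μ ν α) :
    blockCol M * blockRow P = of fun ik jl => (M ik.1 * P jl.1) ik.2 jl.2 := rfl

end Blocks

section BlockNorms

lemma l2_opNorm_transpose {κ μ : Type*} [Fintype κ] [Fintype μ] [DecidableEq κ] [DecidableEq μ]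
    (M : Matrix κ μ ℝ) : ‖Mᵀ‖ = ‖M‖ := by
  rw [← conjTranspose_eq_transpose_of_trivial, l2_opNorm_conjTranspose]

variable {ι κ μ : Type*} [Fintype ι] [Fintype κ] [Fintype μ] [DecidableEq μ]

lemma l2_opNorm_blockCol_le (M : ι → Matrix κ μ ℝ) :
    ‖blockCol M‖ ≤ √(∑ i, ‖M i‖ ^ 2) := by
  rw [l2_opNorm_def]
  refine ContinuousLinearMap.opNorm_le_bound _ (Real.sqrt_nonneg _) fun x => ?_
  refine (pow_le_pow_iff_left₀ (norm_nonneg _) (by positivity) two_ne_zero).1 ?_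
  have hrow (i : ι) : ‖WithLp.toLp 2 (M i *ᵥ x.ofLp)‖ ≤ ‖M i‖ * ‖x‖ := (M i).l2_opNorm_mulVec x
  calc _ = ∑ i, ‖WithLp.toLp 2 (M i *ᵥ x.ofLp)‖ ^ 2 := by
        simp only [EuclideanSpace.norm_sq_eq, Fintype.sum_prod_type]
        rfl
    _ ≤ ∑ i, (‖M i‖ * ‖x‖) ^ 2 := by gcongr with i; exact hrow i
    _ = _ := by rw [mul_pow, Real.sq_sqrt (by positivity), Finset.sum_mul]; simp only [mul_pow]

lemma l2_opNorm_blockRow_le [DecidableEq ι] [DecidableEq κ] (M : ι → Matrix μ κ ℝ) :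
    ‖blockRow M‖ ≤ √(∑ i, ‖M i‖ ^ 2) := by
  rw [blockRow_eq_transpose_blockCol, l2_opNorm_transpose]
  simpa only [l2_opNorm_transpose] using l2_opNorm_blockCol_le fun i => (M i)ᵀ

end BlockNorms

lemma hankel_eq_blockCol_mul_pow_mul_blockRow {R ι κ μ : Type*} [Semiring R] [Fintype κ]
    [DecidableEq κ] (A : Matrix κ κ R) (B : Matrix κ μ R) (C : Matrix ι κ R) (d N : ℕ) :
    (of fun (pq : Fin N × ι) (ij : Fin N × μ) => (C * A ^ (d + pq.1.1 + ij.1.1) * B) pq.2 ij.2)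
      = blockCol (fun i : Fin N => C * A ^ (i : ℕ)) * A ^ d *
          blockRow (fun j : Fin N => A ^ (j : ℕ) * B) := by
  rw [blockCol_mul, blockCol_mul_blockRow]
  ext pq ij
  rw [of_apply, of_apply, add_comm d, pow_add, pow_add]
  simp only [Matrix.mul_assoc]

section PowerBounds

variable {ι κ μ : Type*} [Fintype ι] [Fintype κ] [DecidableEq κ] {A : Matrix κ κ ℝ} {ψ ρ : ℝ}
  (hA : ∀ t : ℕ, ‖A ^ t‖ ≤ ψ * ρ ^ t)
include hA

lemma nonneg_of_forall_l2_opNorm_pow_le : 0 ≤ ψ := by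
  simpa using (norm_nonneg _).trans (hA 0)

variable (hρ0 : 0 ≤ ρ) (hρ1 : ρ < 1)
include hρ0 hρ1

lemma l2_opNorm_blockCol_mul_pow_le (C : Matrix ι κ ℝ) (N : ℕ) :
    ‖blockCol fun i : Fin N => C * A ^ (i : ℕ)‖ ≤ ‖C‖ * ψ / √(1 - ρ ^ 2) := by
  have hψ := nonneg_of_forall_l2_opNorm_pow_le hA
  refine (l2_opNorm_blockCol_le _).trans <| sqrt_sum_sq_le_of_le_geometric (by positivity)
    hρ0 hρ1 (fun _ => norm_nonneg _) fun i => (l2_opNorm_mul _ _).trans ?_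
  rw [mul_assoc]
  exact mul_le_mul_of_nonneg_left (hA i) (norm_nonneg C)

lemma l2_opNorm_blockRow_pow_mul_le [Fintype μ] [DecidableEq μ] (B : Matrix κ μ ℝ) (N : ℕ) :
    ‖blockRow fun j : Fin N => A ^ (j : ℕ) * B‖ ≤ ‖B‖ * ψ / √(1 - ρ ^ 2) := by
  have hψ := nonneg_of_forall_l2_opNorm_pow_le hA
  refine (l2_opNorm_blockRow_le _).trans <| sqrt_sum_sq_le_of_le_geometric (by positivity)
    hρ0 hρ1 (fun _ => norm_nonneg _) fun j => (l2_opNorm_mul _ _).trans ?_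
  rw [mul_comm, mul_assoc]
  exact mul_le_mul_of_nonneg_left (hA j) (norm_nonneg B)

end PowerBounds

end Matrix

/-- Bounding every block truncation `N × N` is equivalent to bounding `H_{d,∞}` on `ℓ²`. -/
theorem stmt17_general {n m r : ℕ} (A : Matrix (Fin n) (Fin n) ℝ)
    (B : Matrix (Fin n) (Fin m) ℝ) (C : Matrix (Fin r) (Fin n) ℝ)
    (ψ ρ : ℝ) (hρ0 : 0 ≤ ρ) (hρ1 : ρ < 1)
    (hA : ∀ t : ℕ, specNorm (A ^ t) ≤ ψ * ρ ^ t) (d N : ℕ) :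
    specNorm (Matrix.of fun (pq : Fin N × Fin r) (ij : Fin N × Fin m) =>
        (C * A ^ (d + pq.1.1 + ij.1.1) * B) pq.2 ij.2) ≤
      ψ ^ 3 * ρ ^ d * specNorm C * specNorm B / (1 - ρ ^ 2) := by
  simp only [Matrix.specNorm_eq_l2_opNorm] at hA ⊢
  have hψ := Matrix.nonneg_of_forall_l2_opNorm_pow_le hA
  have hs : 0 < 1 - ρ ^ 2 := by nlinarith
  rw [Matrix.hankel_eq_blockCol_mul_pow_mul_blockRow]
  calc _ ≤ ‖Matrix.blockCol fun i : Fin N => C * A ^ (i : ℕ)‖ * ‖A ^ d‖ *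
        ‖Matrix.blockRow fun j : Fin N => A ^ (j : ℕ) * B‖ :=
        (Matrix.l2_opNorm_mul _ _).trans (by gcongr; exact Matrix.l2_opNorm_mul _ _)
    _ ≤ ‖C‖ * ψ / √(1 - ρ ^ 2) * (ψ * ρ ^ d) * (‖B‖ * ψ / √(1 - ρ ^ 2)) := by
        gcongr
        exacts [Matrix.l2_opNorm_blockCol_mul_pow_le hA hρ0 hρ1 C N, hA d,
          Matrix.l2_opNorm_blockRow_pow_mul_le hA hρ0 hρ1 B N]
    _ = ψ ^ 3 * ρ ^ d * ‖C‖ * ‖B‖ / (1 - ρ ^ 2) := by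
        field_simp
        rw [Real.sq_sqrt hs.le]

/-- Every `N × N` block truncation of the Hankel operator `H_{d,∞}` with blocks
`C A^{d+i+j} B` obeys the spectral norm bound, which is equivalent to the bound on the
operator norm of `H_{d,∞}` itself. -/
theorem stmt17 {n m r : ℕ} (A : Matrix (Fin n) (Fin n) ℝ)
    (B : Matrix (Fin n) (Fin m) ℝ) (C : Matrix (Fin r) (Fin n) ℝ)
    (ψ ρ : ℝ) (hψ : 0 < ψ) (hρ0 : 0 ≤ ρ) (hρ1 : ρ < 1)
    (hA : ∀ t : ℕ, specNorm (A ^ t) ≤ ψ * ρ ^ t) (d N : ℕ) :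
    specNorm (Matrix.of fun (pq : Fin N × Fin r) (ij : Fin N × Fin m) =>
        (C * A ^ (d + pq.1.1 + ij.1.1) * B) pq.2 ij.2) ≤
      ψ ^ 3 * ρ ^ d * specNorm C * specNorm B / (1 - ρ ^ 2) :=
  stmt17_general A B C ψ ρ hρ0 hρ1 hA d N
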